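/- Doubly-exponential lower bound for upward interiors of NFAs: for every n ≥ 7, let ℓ = ⌊(n−4)/3⌋, let Γ = {0,1,…,2^ℓ−1} and Υ = {1,…,ℓ} be disjoint alphabets and Σ = Γ ∪ Υ. For x,y ∈ Γ and k ∈ Υ write x =_k y when x and y, viewed as ℓ-bit sequences, have the same k-th bit. Let L'_n = {x w y k w' ∈ Γ·Σ*·Γ·Υ·Σ* | x =_k y}, L''_n = Γ·(Γ·Υ)*, and L_n = L'_n ∪ (Σ* \ L''_n). Then nN(L_n) ≤ n and nN(↑int L_n) ≥ 2^{2^ℓ} + 1 = 2^{2^{⌊(n−4)/3⌋}} + 1. -/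

import Mathlib

/-- An accepting run of an NFA on a word `w`: a sequence of `|w|+1` states starting
in an initial state, ending in an accepting state, and following the transitions. -/
def NFA.IsAcceptingRun {α σ : Type*} (M : NFA α σ) (w : List α)
    (r : Fin (w.length + 1) → σ) : Prop :=
  r 0 ∈ M.start ∧ r (Fin.last w.length) ∈ M.accept ∧
    ∀ i : Fin w.length, r i.succ ∈ M.step (r i.castSucc) (w.get i)

/-- An NFA is unambiguous (a UFA) if every word has at most one accepting run. -/
def NFA.Unambiguous {α σ : Type*} (M : NFA α σ) : Prop :=
  ∀ (w : List α) (r₁ r₂ : Fin (w.length + 1) → σ),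
    M.IsAcceptingRun w r₁ → M.IsAcceptingRun w r₂ → r₁ = r₂

/-- A deterministic NFA (a DFA with a possibly partial transition function):
exactly one initial state and at most one successor per state and letter. -/
def NFA.Deterministic {α σ : Type*} (M : NFA α σ) : Prop :=
  (∃ q₀, M.start = {q₀}) ∧ ∀ q a, (M.step q a).Subsingleton

/-- Minimal number of states of an NFA recognizing `L` (`nN(L)`). -/
noncomputable def nN {α : Type} (L : Language α) : ℕ :=
  sInf {n | ∃ (σ : Type) (inst : Fintype σ) (M : NFA α σ),
    @Fintype.card σ inst = n ∧ M.accepts = L}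

/-- Minimal number of states of a DFA (partial transition function allowed)
recognizing `L` (`nD(L)`). -/
noncomputable def nD {α : Type} (L : Language α) : ℕ :=
  sInf {n | ∃ (σ : Type) (inst : Fintype σ) (M : NFA α σ),
    M.Deterministic ∧ @Fintype.card σ inst = n ∧ M.accepts = L}

/-- Minimal number of states of an unambiguous NFA recognizing `L` (`nU(L)`). -/
noncomputable def nU {α : Type} (L : Language α) : ℕ :=
  sInf {n | ∃ (σ : Type) (inst : Fintype σ) (M : NFA α σ),
    M.Unambiguous ∧ @Fintype.card σ inst = n ∧ M.accepts = L}

/-- Upward closure: all superwords (w.r.t. the scattered-subword ordering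
`List.Sublist`) of words of `L`. -/
def upClosure {α : Type} (L : Language α) : Language α := {x | ∃ y ∈ L, y.Sublist x}

/-- Downward closure: all subwords of words of `L`. -/
def downClosure {α : Type} (L : Language α) : Language α := {x | ∃ y ∈ L, x.Sublist y}

/-- Upward interior: words all of whose superwords are in `L`. -/
def upInterior {α : Type} (L : Language α) : Language α := {x | ∀ y, x.Sublist y → y ∈ L}

/-- Downward interior: words all of whose subwords are in `L`. -/
def downInterior {α : Type} (L : Language α) : Language α := {x | ∀ y, y.Sublist x → y ∈ L}

/-!
A word lies in `↑int L_n` iff it is nonempty and its tail contains every letter of `Γ`. If it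
does, then in any superword `x·(ΓΥ)*` of it the letter `x` recurs inside some pair `x k`, so the
superword lies in `L'_n`. If some `z` is missing from the tail of `u`, every letter of `u` can be
padded into a pair `a k` whose `k`-th bit separates `a` from `z` (a differing bit of `a ≠ z`, or a
copy of `z` with bit `k` flipped), which gives a superword of `z·u` in `z·(ΓΥ)* \ L'_n`.

For this language the pairs `(c·S, Γ \ S)`, `S ⊆ Γ`, together with `(ε, c·Γ)` form an extended
fooling set, since `c·T·(Γ \ S)` has a tail covering `Γ` iff `S ⊆ T`. In the other direction,
`L_n` is recognised by the four-state DFA for the complement of `L''_n` whose initial and sink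
states are shared with an NFA for `L'_n`: it guesses the bit `k` along with the `k`-th bit of the
first letter (`2ℓ` states) and then a matching `Γ`-letter followed by `k` (`ℓ` states).
-/

/-- `Set.mem_setOf_eq` does not fire here, as `Language` has its own `Membership` instance. -/
@[simp]
theorem Language.mem_setOf_iff {α : Type*} {p : List α → Prop} {w : List α} :
    @Membership.mem (List α) (Language α) _ {w | p w} w ↔ p w :=
  Iff.rfl

@[simp]
theorem Language.mem_top {α : Type*} {w : List α} : w ∈ (⊤ : Language α) := trivial

namespace NFA

variable {α σ : Type*} {M : NFA α σ}

theorem mem_acceptsFrom_iff_exists_singleton {S : Set σ} {w : List α} :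
    w ∈ M.acceptsFrom S ↔ ∃ s ∈ S, w ∈ M.acceptsFrom {s} := by
  simp only [mem_acceptsFrom, mem_evalFrom_iff_exists (S := S)]
  tauto

theorem acceptsFrom_singleton_eq (R : σ → Language α)
    (hnil : ∀ q, [] ∈ R q ↔ q ∈ M.accept)
    (hcons : ∀ q a w, a :: w ∈ R q ↔ ∃ q' ∈ M.step q a, w ∈ R q') (q : σ) :
    M.acceptsFrom {q} = R q := by
  ext w
  induction w generalizing q with
  | nil => simp [hnil]
  | cons a w ih =>
    rw [cons_mem_acceptsFrom, stepSet_singleton, mem_acceptsFrom_iff_exists_singleton, hcons]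
    simp only [ih]

theorem card_le_card_of_fooling [Fintype σ] {ι : Type*} [Fintype ι] (x y : ι → List α)
    (hmem : ∀ i, x i ++ y i ∈ M.accepts)
    (hcross : ∀ i j, i ≠ j → x i ++ y j ∉ M.accepts ∨ x j ++ y i ∉ M.accepts) :
    Fintype.card ι ≤ Fintype.card σ := by
  have hsplit (u v : List α) : u ++ v ∈ M.accepts ↔ ∃ q ∈ M.eval u, v ∈ M.acceptsFrom {q} := by
    rw [accepts_eq_acceptsFrom_start, append_mem_acceptsFrom,
      mem_acceptsFrom_iff_exists_singleton]
    rfl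
  choose q hq hqy using fun i => (hsplit (x i) (y i)).1 (hmem i)
  refine Fintype.card_le_of_injective q fun i j hij => by_contra fun hne => ?_
  rcases hcross i j hne with h | h
  · exact h ((hsplit _ _).2 ⟨q i, hq i, hij ▸ hqy j⟩)
  · exact h ((hsplit _ _).2 ⟨q j, hq j, hij ▸ hqy i⟩)

end NFA

theorem nN_le_card {α σ : Type} [Fintype σ] (M : NFA α σ) : nN M.accepts ≤ Fintype.card σ :=
  Nat.sInf_le ⟨σ, inferInstance, M, rfl, rfl⟩

theorem card_le_nN_of_fooling {α : Type} {L : Language α} {ι : Type*} [Fintype ι]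
    (hL : ∃ (σ : Type) (_ : Fintype σ) (M : NFA α σ), M.accepts = L) (x y : ι → List α)
    (hmem : ∀ i, x i ++ y i ∈ L) (hcross : ∀ i j, i ≠ j → x i ++ y j ∉ L ∨ x j ++ y i ∉ L) :
    Fintype.card ι ≤ nN L := by
  obtain ⟨σ, _, M, hM⟩ := hL
  refine le_csInf ⟨Fintype.card σ, σ, inferInstance, M, rfl, hM⟩ ?_
  rintro _ ⟨τ, _, N, rfl, rfl⟩
  exact N.card_le_card_of_fooling x y hmem hcross

theorem mem_upInterior_of_sublist {α : Type} {L : Language α} {x y : List α}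
    (hx : x ∈ upInterior L) (hxy : x.Sublist y) : y ∈ upInterior L :=
  fun _ hyz => hx _ (hxy.trans hyz)

namespace Witness

open Sum

variable {α β : Type}

def pairWord (ps : List (α × β)) : List (α ⊕ β) := ps.flatMap fun p => [inl p.1, inr p.2]

@[simp]
theorem pairWord_nil : pairWord ([] : List (α × β)) = [] := rfl

@[simp]
theorem pairWord_cons (p : α × β) (ps : List (α × β)) :
    pairWord (p :: ps) = inl p.1 :: inr p.2 :: pairWord ps := rfl

theorem pair_infix_pairWord_iff {y : α} {k : β} {ps : List (α × β)} :
    [inl y, inr k] <:+: pairWord ps ↔ (y, k) ∈ ps := by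
  induction ps with
  | nil => simp
  | cons p ps ih => simp [List.infix_cons_iff, ih, Prod.ext_iff]

theorem exists_mem_of_inl_mem_pairWord {y : α} {ps : List (α × β)} (h : inl y ∈ pairWord ps) :
    ∃ k, (y, k) ∈ ps := by
  induction ps with
  | nil => simp at h
  | cons p ps ih =>
    simp only [pairWord_cons, List.mem_cons, inl.injEq, reduceCtorEq, false_or] at h
    rcases h with rfl | h
    · exact ⟨p.2, List.mem_cons_self ..⟩
    · obtain ⟨k, hk⟩ := ih h
      exact ⟨k, List.mem_cons_of_mem _ hk⟩

def IsPairWord (w : List (α ⊕ β)) : Prop := ∃ ps : List (α × β), w = pairWord ps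

theorem isPairWord_nil : IsPairWord ([] : List (α ⊕ β)) := ⟨[], rfl⟩

theorem not_isPairWord_inr_cons (k : β) (w : List (α ⊕ β)) : ¬ IsPairWord (inr k :: w) := by
  rintro ⟨_ | ⟨p, ps⟩, h⟩ <;> simp at h

theorem isPairWord_inl_cons {y : α} {w : List (α ⊕ β)} :
    IsPairWord (inl y :: w) ↔ ∃ k w', w = inr k :: w' ∧ IsPairWord w' := by
  constructor
  · rintro ⟨_ | ⟨p, ps⟩, h⟩
    · simp at h
    · simp only [pairWord_cons, List.cons.injEq] at h
      exact ⟨p.2, _, h.2, ps, rfl⟩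
  · rintro ⟨k, w', rfl, ps, rfl⟩
    exact ⟨(y, k) :: ps, rfl⟩

variable (bit : α → β → Bool)

def matchLang : Language (α ⊕ β) :=
  {w | ∃ (x y : α) (k : β) (w₁ w₂ : List (α ⊕ β)),
    w = inl x :: (w₁ ++ [inl y, inr k] ++ w₂) ∧ bit x k = bit y k}

def pairLang : Language (α ⊕ β) :=
  {w | ∃ (x : α) (ps : List (α × β)), w = inl x :: pairWord ps}

def witnessLang : Language (α ⊕ β) := {w | w ∈ matchLang bit ∨ w ∉ pairLang}

variable {bit}

theorem inl_cons_mem_matchLang {x : α} {w : List (α ⊕ β)} :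
    inl x :: w ∈ matchLang bit ↔ ∃ k y, bit x k = bit y k ∧ [inl y, inr k] <:+: w := by
  constructor
  · rintro ⟨x, y, k, w₁, w₂, h, hbit⟩
    simp only [List.cons.injEq, inl.injEq] at h
    obtain ⟨rfl, rfl⟩ := h
    exact ⟨k, y, hbit, ⟨w₁, w₂, rfl⟩⟩
  · rintro ⟨k, y, hbit, ⟨w₁, w₂, rfl⟩⟩
    exact ⟨x, y, k, w₁, w₂, rfl, hbit⟩

@[simp]
theorem nil_mem_witnessLang : [] ∈ witnessLang bit := by
  right; simp [pairLang]

@[simp]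
theorem inr_cons_mem_witnessLang (k : β) (w : List (α ⊕ β)) : inr k :: w ∈ witnessLang bit := by
  right; simp [pairLang]

theorem inl_cons_mem_pairLang {x : α} {w : List (α ⊕ β)} :
    inl x :: w ∈ (pairLang : Language (α ⊕ β)) ↔ IsPairWord w := by
  simp [pairLang, IsPairWord]

theorem inl_cons_mem_witnessLang {x : α} {w : List (α ⊕ β)} :
    inl x :: w ∈ witnessLang bit ↔
      (∃ k y, bit x k = bit y k ∧ [inl y, inr k] <:+: w) ∨ ¬ IsPairWord w :=
  or_congr inl_cons_mem_matchLang (not_congr inl_cons_mem_pairLang)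

theorem exists_sublist_pairWord_of_inl_not_mem
    (hsep : ∀ a z : α, a ≠ z → ∃ k, bit z k ≠ bit a k)
    (hflip : ∀ (z : α) (k : β), ∃ y, bit z k ≠ bit y k)
    {z : α} {u : List (α ⊕ β)} (hz : inl z ∉ u) :
    ∃ ps : List (α × β), u.Sublist (pairWord ps) ∧ ∀ p ∈ ps, bit z p.2 ≠ bit p.1 p.2 := by
  induction u with
  | nil => exact ⟨[], List.nil_sublist _, by simp⟩
  | cons c u ih =>
    obtain ⟨ps, hsub, hps⟩ := ih fun h => hz (List.mem_cons_of_mem _ h)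
    obtain ⟨p, hp, hbit⟩ :
        ∃ p : α × β, [c].Sublist [inl p.1, inr p.2] ∧ bit z p.2 ≠ bit p.1 p.2 := by
      rcases c with a | k
      · obtain ⟨k, hk⟩ := hsep a z fun h => hz (h ▸ List.mem_cons_self ..)
        exact ⟨(a, k), by simp, hk⟩
      · obtain ⟨y, hy⟩ := hflip z k
        exact ⟨(y, k), by simp, hy⟩
    exact ⟨p :: ps, hp.append hsub, List.forall_mem_cons.2 ⟨hbit, hps⟩⟩

theorem inl_cons_not_mem_upInterior
    (hsep : ∀ a z : α, a ≠ z → ∃ k, bit z k ≠ bit a k)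
    (hflip : ∀ (z : α) (k : β), ∃ y, bit z k ≠ bit y k)
    {z : α} {u : List (α ⊕ β)} (hz : inl z ∉ u) : inl z :: u ∉ upInterior (witnessLang bit) := by
  intro hu
  obtain ⟨ps, hsub, hps⟩ := exists_sublist_pairWord_of_inl_not_mem hsep hflip hz
  rcases hu _ (hsub.cons_cons _) with hmatch | hpair
  · obtain ⟨k, y, hbit, hinfix⟩ := inl_cons_mem_matchLang.1 hmatch
    exact hps _ (pair_infix_pairWord_iff.1 hinfix) hbit
  · exact hpair ⟨z, ps, rfl⟩

def tailCoverLang (α β : Type) : Language (α ⊕ β) :=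
  {w | ∃ c w', w = c :: w' ∧ ∀ z : α, inl z ∈ w'}

@[simp]
theorem nil_not_mem_tailCoverLang : [] ∉ tailCoverLang α β := by
  rintro ⟨c, w', h, -⟩; simp at h

@[simp]
theorem cons_mem_tailCoverLang {c : α ⊕ β} {w : List (α ⊕ β)} :
    c :: w ∈ tailCoverLang α β ↔ ∀ z : α, inl z ∈ w := by
  constructor
  · rintro ⟨c', w', h, hw⟩
    exact (List.cons.inj h).2 ▸ hw
  · exact fun h => ⟨c, w, rfl, h⟩

theorem tailCoverLang_le_upInterior : tailCoverLang α β ≤ upInterior (witnessLang bit) := by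
  rintro _ ⟨c, w, rfl, hw⟩ v hv
  refine or_iff_not_imp_right.2 fun hpair => ?_
  obtain ⟨x, ps, rfl⟩ := not_not.1 hpair
  obtain ⟨k, hk⟩ := exists_mem_of_inl_mem_pairWord (hv.tail.subset (hw x))
  exact inl_cons_mem_matchLang.2 ⟨k, x, rfl, pair_infix_pairWord_iff.2 hk⟩

theorem upInterior_witnessLang [Nonempty α]
    (hsep : ∀ a z : α, a ≠ z → ∃ k, bit z k ≠ bit a k)
    (hflip : ∀ (z : α) (k : β), ∃ y, bit z k ≠ bit y k) :
    upInterior (witnessLang bit) = tailCoverLang α β := by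
  refine le_antisymm (fun w hw => ?_) tailCoverLang_le_upInterior
  rcases w with _ | ⟨c, w⟩
  · obtain ⟨z⟩ := ‹Nonempty α›
    exact (inl_cons_not_mem_upInterior hsep hflip List.not_mem_nil
      (mem_upInterior_of_sublist hw (List.nil_sublist [inl z]))).elim
  · refine cons_mem_tailCoverLang.2 fun z => by_contra fun hz => ?_
    by_cases hc : c = inl z
    · exact inl_cons_not_mem_upInterior hsep hflip hz (hc ▸ hw)
    · have hz' : inl z ∉ c :: w := by simp [Ne.symm hc, hz]
      exact inl_cons_not_mem_upInterior hsep hflip hz'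
        (mem_upInterior_of_sublist hw (List.sublist_cons_self _ _))

def coverNFA (α β : Type) [DecidableEq α] [Fintype α] : NFA (α ⊕ β) (Option (Finset α)) where
  step
    | none, _ => {some Finset.univ}
    | some S, inl x => {some (S.erase x)}
    | some S, inr _ => {some S}
  start := {none}
  accept := {some ∅}

def coverNFA.rightLang : Option (Finset α) → Language (α ⊕ β)
  | none => tailCoverLang α β
  | some S => {w | ∀ z ∈ S, inl z ∈ w}

theorem coverNFA_accepts [DecidableEq α] [Fintype α] :
    (coverNFA α β).accepts = tailCoverLang α β := by
  refine NFA.acceptsFrom_singleton_eq coverNFA.rightLang (fun q => ?_) (fun q a w => ?_) none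
  · rcases q with _ | S
    · simp [coverNFA, coverNFA.rightLang]
    · simp [coverNFA, coverNFA.rightLang, Finset.eq_empty_iff_forall_notMem]
  · rcases q with _ | S
    · simp [coverNFA, coverNFA.rightLang]
    rcases a with x | k
    · simp only [coverNFA, coverNFA.rightLang, Language.mem_setOf_iff, List.mem_cons, inl.injEq,
        Set.mem_singleton_iff, exists_eq_left, Finset.mem_erase]
      exact forall_congr' fun z => by tauto
    · simp [coverNFA, coverNFA.rightLang]

theorem card_lt_length_of_mem_tailCoverLang [Fintype α] {w : List (α ⊕ β)}
    (hw : w ∈ tailCoverLang α β) : Fintype.card α < w.length := by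
  classical
  obtain ⟨c, w, rfl, hw⟩ := hw
  calc Fintype.card α = (Finset.univ.map ⟨inl, inl_injective⟩ : Finset (α ⊕ β)).card := by simp
    _ ≤ w.toFinset.card := Finset.card_le_card fun _ h => by
      obtain ⟨z, -, rfl⟩ := Finset.mem_map.1 h
      exact List.mem_toFinset.2 (hw z)
    _ < (c :: w).length := Nat.lt_succ_of_le (List.toFinset_card_le w)

variable (β) in
noncomputable def foolingPrefix (c : α) : Option (Finset α) → List (α ⊕ β)
  | none => []
  | some S => inl c :: S.toList.map inl

variable (β) in
noncomputable def foolingSuffix [Fintype α] [DecidableEq α] (c : α) :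
    Option (Finset α) → List (α ⊕ β)
  | none => inl c :: Finset.univ.toList.map inl
  | some S => Sᶜ.toList.map inl

theorem foolingPrefix_append_foolingSuffix_mem_iff [Fintype α] [DecidableEq α] (c : α)
    (S T : Finset α) :
    foolingPrefix β c (some T) ++ foolingSuffix β c (some S) ∈ tailCoverLang α β ↔ S ⊆ T := by
  simp only [foolingPrefix, foolingSuffix, List.cons_append, cons_mem_tailCoverLang,
    List.mem_append, List.mem_map, Finset.mem_toList, inl.injEq, exists_eq_right,
    Finset.mem_compl]
  exact ⟨fun h z hz => (h z).resolve_right (not_not.2 hz), fun h z => or_not_of_imp (h ·)⟩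

theorem foolingSuffix_not_mem [Fintype α] [DecidableEq α] (c : α) (S : Finset α) :
    foolingSuffix β c (some S) ∉ tailCoverLang α β := fun h => by
  have := card_lt_length_of_mem_tailCoverLang h
  simp only [foolingSuffix, List.length_map, Finset.length_toList] at this
  exact this.not_ge (Finset.card_le_univ _)

theorem two_pow_card_add_one_le_nN_tailCoverLang [Fintype α] [Nonempty α] :
    2 ^ Fintype.card α + 1 ≤ nN (tailCoverLang α β) := by
  classical
  obtain ⟨c⟩ := ‹Nonempty α›
  have hfool := card_le_nN_of_fooling ⟨_, inferInstance, coverNFA α β, coverNFA_accepts⟩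
    (foolingPrefix β c) (foolingSuffix β c) ?_ ?_
  · simpa [Fintype.card_option, Fintype.card_finset] using hfool
  · rintro (_ | S)
    · simp [foolingPrefix, foolingSuffix]
    · exact (foolingPrefix_append_foolingSuffix_mem_iff c S S).2 subset_rfl
  · rintro (_ | S) (_ | T) hne
    · exact absurd rfl hne
    · exact .inl (foolingSuffix_not_mem c T)
    · exact .inr (foolingSuffix_not_mem c S)
    · simp only [foolingPrefix_append_foolingSuffix_mem_iff]
      exact not_and_or.1 fun h => hne (congrArg some (h.2.antisymm h.1))

inductive WitnessState (β : Type)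
  | head | beforePair | midPair | sink
  | wait (k : β) (b : Bool)
  | expect (k : β)
  deriving Fintype

theorem card_witnessState [Fintype β] :
    Fintype.card (WitnessState β) = 3 * Fintype.card β + 4 := by
  rw [instFintypeWitnessState, Fintype.ofEquiv_card]
  simp only [Fintype.card_sum, Fintype.card_unit, Fintype.card_sigma, Fintype.card_bool,
    Finset.sum_const, Finset.card_univ, smul_eq_mul]
  ring

variable (bit : α → β → Bool)

open WitnessState in
def witnessNFA : NFA (α ⊕ β) (WitnessState β) where
  step
    | head, inl x => insert beforePair (Set.range fun k => wait k (bit x k))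
    | head, inr _ => {sink}
    | beforePair, inl _ => {midPair}
    | beforePair, inr _ => {sink}
    | midPair, inl _ => {sink}
    | midPair, inr _ => {beforePair}
    | sink, _ => {sink}
    | wait k b, inl y => insert (wait k b) {q | b = bit y k ∧ q = expect k}
    | wait k b, inr _ => {wait k b}
    | expect k, inr k' => {q | k = k' ∧ q = sink}
    | expect _, inl _ => ∅
  start := {head}
  accept := {head, midPair, sink}

open WitnessState in
def WitnessState.rightLang : WitnessState β → Language (α ⊕ β)
  | head => witnessLang bit
  | beforePair => {w | ¬ IsPairWord w}
  | midPair => {w | ¬ ∃ k w', w = inr k :: w' ∧ IsPairWord w'}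
  | sink => ⊤
  | wait k b => {w | ∃ y, b = bit y k ∧ [inl y, inr k] <:+: w}
  | expect k => {w | [inr k] <+: w}

theorem witnessNFA_accepts : (witnessNFA bit).accepts = witnessLang bit := by
  refine NFA.acceptsFrom_singleton_eq (WitnessState.rightLang bit) (fun q => ?_)
    (fun q a w => ?_) .head
  · cases q <;> simp [witnessNFA, WitnessState.rightLang, isPairWord_nil]
  · cases q <;> cases a <;>
      simp [witnessNFA, WitnessState.rightLang, inl_cons_mem_witnessLang, isPairWord_inl_cons,
        not_isPairWord_inr_cons, List.infix_cons_iff, and_or_left, exists_or, or_comm]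

theorem nN_witnessLang_le [Fintype β] : nN (witnessLang bit) ≤ 3 * Fintype.card β + 4 := by
  rw [← witnessNFA_accepts, ← card_witnessState]
  exact nN_le_card _

end Witness

theorem Fin.exists_testBit_ne_of_ne {ℓ : ℕ} {a z : Fin (2 ^ ℓ)} (h : a ≠ z) :
    ∃ k : Fin ℓ, z.val.testBit k ≠ a.val.testBit k := by
  obtain ⟨i, hi⟩ := Nat.exists_testBit_ne_of_ne (Fin.val_injective.ne h.symm)
  refine ⟨⟨i, lt_of_not_ge fun hle => hi ?_⟩, hi⟩
  have hpow : 2 ^ ℓ ≤ 2 ^ i := Nat.pow_le_pow_right two_pos hle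
  rw [Nat.testBit_lt_two_pow (z.isLt.trans_le hpow), Nat.testBit_lt_two_pow (a.isLt.trans_le hpow)]

theorem Fin.exists_testBit_ne {ℓ : ℕ} (z : Fin (2 ^ ℓ)) (k : Fin ℓ) :
    ∃ y : Fin (2 ^ ℓ), z.val.testBit k ≠ y.val.testBit k :=
  ⟨⟨z.val ^^^ 2 ^ k.val, Nat.xor_lt_two_pow z.isLt (Nat.pow_lt_pow_right one_lt_two k.isLt)⟩,
    by simp [Nat.testBit_xor, Nat.testBit_two_pow_self]⟩

/-- Doubly-exponential lower bound for upward interiors: for `n ≥ 7` and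
`ℓ = ⌊(n-4)/3⌋`, over `Σ = Γ ⊕ Υ` with `Γ = Fin (2^ℓ)` and `Υ = Fin ℓ`, the
language `L_n = L'_n ∪ (Σ* \ L''_n)` (where `L'_n` requires the initial
`Γ`-letter to share, with some later `Γ`-letter, the bit indicated by the
`Υ`-letter that follows it, and `L''_n = Γ·(Γ·Υ)*`) satisfies `nN(L_n) ≤ n` and
`nN(↑int L_n) ≥ 2^(2^ℓ) + 1`. -/
theorem upInterior_doubly_exponential (n : ℕ) (hn : 7 ≤ n) (ℓ : ℕ)
    (hℓ : ℓ = (n - 4) / 3)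
    (L' L'' L : Language (Fin (2 ^ ℓ) ⊕ Fin ℓ))
    (hL' : L' = {w | ∃ (x y : Fin (2 ^ ℓ)) (k : Fin ℓ)
        (w₁ w₂ : List (Fin (2 ^ ℓ) ⊕ Fin ℓ)),
        w = Sum.inl x :: (w₁ ++ [Sum.inl y, Sum.inr k] ++ w₂) ∧
        Nat.testBit x.val k.val = Nat.testBit y.val k.val})
    (hL'' : L'' = {w | ∃ (x : Fin (2 ^ ℓ)) (ps : List (Fin (2 ^ ℓ) × Fin ℓ)),
        w = Sum.inl x :: ps.flatMap (fun p => [Sum.inl p.1, Sum.inr p.2])})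
    (hL : L = {w | w ∈ L' ∨ w ∉ L''}) :
    nN L ≤ n ∧ 2 ^ 2 ^ ℓ + 1 ≤ nN (upInterior L) := by
  subst hL' hL'' hL
  let bit : Fin (2 ^ ℓ) → Fin ℓ → Bool := fun x k => x.val.testBit k.val
  change nN (Witness.witnessLang bit) ≤ n ∧
    2 ^ 2 ^ ℓ + 1 ≤ nN (upInterior (Witness.witnessLang bit))
  constructor
  · calc nN (Witness.witnessLang bit) ≤ 3 * ℓ + 4 := by
          simpa using Witness.nN_witnessLang_le bit
      _ ≤ n := by omega
  · rw [Witness.upInterior_witnessLang (fun _ _ => Fin.exists_testBit_ne_of_ne)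
      Fin.exists_testBit_ne]
    simpa using Witness.two_pow_card_add_one_le_nN_tailCoverLang (α := Fin (2 ^ ℓ)) (β := Fin ℓ)
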